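/- arXiv:2212.00248 — 2 statements merged into one kernel-verified Lean document; each statement's English description precedes it below -/
import Mathlib

section
/- Let E : A → A be a faithful positive linear map on a C*-algebra A (meaning E(a*a) = 0 implies a = 0), and let ρ : A → B be a *-homomorphism into a C*-algebra B. If ρ is injective on the image of E and ‖ρ(E(x))‖ ≤ ‖ρ(x)‖ for every positive x ∈ A, then ρ is injective. -/
theorem LinearMap.eq_zero_of_injOn_range_of_map_eq_zero {R M N P F : Type*} [Semiring R]
    [AddCommMonoid M] [AddCommMonoid N] [Module R M] [Module R N] [Zero P] [FunLike F N P]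
    [ZeroHomClass F N P] (E : M →ₗ[R] N) (ρ : F) (hinj : Set.InjOn ρ (Set.range E)) {x : M}
    (hx : ρ (E x) = 0) : E x = 0 :=
  hinj (Set.mem_range_self x) ⟨0, map_zero E⟩ (by rw [hx, map_zero])

theorem stmt3_general {A B : Type*} [CStarAlgebra A] [PartialOrder A] [StarOrderedRing A]
    [CStarAlgebra B] (E : A →ₗ[ℂ] A)
    (hfaith : ∀ a : A, E (star a * a) = 0 → a = 0)
    (ρ : A →⋆ₐ[ℂ] B)
    (hinj : Set.InjOn ρ (Set.range E))
    (hnorm : ∀ x : A, 0 ≤ x → ‖ρ (E x)‖ ≤ ‖ρ x‖) :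
    Function.Injective ρ := by
  rw [injective_iff_map_eq_zero]
  intro a ha
  have hρ : ρ (star a * a) = 0 := by rw [map_mul, map_star, ha, mul_zero]
  have hρE : ρ (E (star a * a)) = 0 :=
    norm_le_zero_iff.mp <| (hnorm _ (star_mul_self_nonneg a)).trans_eq (by rw [hρ, norm_zero])
  exact hfaith a (E.eq_zero_of_injOn_range_of_map_eq_zero ρ hinj hρE)

/-- Let `E : A → A` be a faithful positive linear map on a C*-algebra `A` and
`ρ : A → B` a *-homomorphism.  If `ρ` is injective on the image of `E` and
`‖ρ (E x)‖ ≤ ‖ρ x‖` for every positive `x`, then `ρ` is injective. -/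
theorem stmt3 {A B : Type*} [CStarAlgebra A] [PartialOrder A] [StarOrderedRing A]
    [CStarAlgebra B] (E : A →ₗ[ℂ] A)
    (hpos : ∀ a : A, 0 ≤ a → 0 ≤ E a)
    (hfaith : ∀ a : A, E (star a * a) = 0 → a = 0)
    (ρ : A →⋆ₐ[ℂ] B)
    (hinj : Set.InjOn ρ (Set.range E))
    (hnorm : ∀ x : A, 0 ≤ x → ‖ρ (E x)‖ ≤ ‖ρ x‖) :
    Function.Injective ρ :=
  stmt3_general E hfaith ρ hinj hnorm
end

section
/- Let E be a strongly connected directed graph with finitely many vertices. Then E satisfies Condition (L) if and only if E is not a simple cycle. -/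
/-!
A simple cycle has no exit: every edge lies on it and its sources are pairwise distinct.
Conversely, a cycle without an exit can be shortened, by cutting at a repeated source, to one
with pairwise distinct sources, which still has no exit. The sources of an exitless cycle form
a set closed under following edges, so by strong connectivity it contains every vertex, and then
every edge lies on the cycle: the graph is a simple cycle.
-/

theorem List.exists_eq_append_cons_append_cons_of_not_nodup_map {α β : Type*} {f : α → β} :
    ∀ {l : List α}, ¬(l.map f).Nodup →
      ∃ l₁ a l₂ b l₃, l = l₁ ++ a :: l₂ ++ b :: l₃ ∧ f a = f b
  | [], h => absurd List.nodup_nil h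
  | x :: t, h => by
    rw [List.map_cons, List.nodup_cons, not_and_or, not_not] at h
    rcases h with hx | ht
    · obtain ⟨b, hb, hfb⟩ := List.mem_map.mp hx
      obtain ⟨l₂, l₃, rfl⟩ := List.append_of_mem hb
      exact ⟨[], x, l₂, b, l₃, rfl, hfb.symm⟩
    · obtain ⟨l₁, a, l₂, b, l₃, rfl, hab⟩ := exists_eq_append_cons_append_cons_of_not_nodup_map ht
      exact ⟨x :: l₁, a, l₂, b, l₃, rfl, hab⟩

section DirectedGraph

variable {V E : Type*} {r s : E → V}

theorem isChain_and_closed_of_isChain_append_cons {l₁ l₂ l₃ : List E} {e f : E}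
    (hch : (l₁ ++ e :: l₂ ++ f :: l₃).IsChain fun e f => r e = s f) (hef : s e = s f) :
    (e :: l₂).IsChain (fun e f => r e = s f) ∧
      s e = r ((e :: l₂).getLast (List.cons_ne_nil _ _)) := by
  rw [List.append_assoc] at hch
  have hch' := hch.right_of_append
  refine ⟨hch'.left_of_append, ?_⟩
  rw [hef, hch'.rel_getLast_head_of_append (List.cons_ne_nil _ _) (List.cons_ne_nil _ _)]
  rfl

theorem exists_closed_subpath_nodup_sources (β : List E) (hβ : β ≠ [])
    (hch : β.IsChain fun e f => r e = s f) (hcl : s (β.head hβ) = r (β.getLast hβ)) :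
    ∃ (γ : List E) (hγ : γ ≠ []), (γ.IsChain fun e f => r e = s f) ∧
      s (γ.head hγ) = r (γ.getLast hγ) ∧ (γ.map s).Nodup ∧ γ ⊆ β := by
  by_cases hnd : (β.map s).Nodup
  · exact ⟨β, hβ, hch, hcl, hnd, List.Subset.refl β⟩
  obtain ⟨l₁, e, l₂, f, l₃, hβ_eq, hef⟩ :=
    List.exists_eq_append_cons_append_cons_of_not_nodup_map hnd
  obtain ⟨hch', hcl'⟩ := isChain_and_closed_of_isChain_append_cons (hβ_eq ▸ hch) hef
  obtain ⟨γ, hγ, hγch, hγcl, hγnd, hγsub⟩ :=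
    exists_closed_subpath_nodup_sources (e :: l₂) (List.cons_ne_nil _ _) hch' hcl'
  refine ⟨γ, hγ, hγch, hγcl, hγnd, List.Subset.trans hγsub ?_⟩
  rw [hβ_eq]
  exact (List.infix_append l₁ _ _).subset
termination_by β.length
decreasing_by simp [hβ_eq]; omega

theorem target_mem_tail_sources_or_eq_getLast :
    ∀ {l : List E} (hl : l ≠ []), (l.IsChain fun e f => r e = s f) → ∀ e ∈ l,
      r e ∈ l.tail.map s ∨ r e = r (l.getLast hl)
  | [x], _, _, e, he => Or.inr (by rw [List.mem_singleton.mp he]; rfl)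
  | x :: y :: t, _, hch, e, he => by
    rw [List.isChain_cons_cons] at hch
    rcases List.mem_cons.mp he with rfl | he
    · exact Or.inl (hch.1 ▸ List.mem_map_of_mem (List.mem_cons_self ..))
    · rcases target_mem_tail_sources_or_eq_getLast (List.cons_ne_nil y t) hch.2 e he with h | h
      · exact Or.inl (List.map_subset s (List.tail_subset _) h)
      · exact Or.inr h

theorem target_mem_sources_of_closed {α : List E} (hα : α ≠ [])
    (hch : α.IsChain fun e f => r e = s f) (hcl : s (α.head hα) = r (α.getLast hα))
    {e : E} (he : e ∈ α) : r e ∈ α.map s := by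
  rcases target_mem_tail_sources_or_eq_getLast hα hch e he with h | h
  · exact List.map_subset s (List.tail_subset α) h
  · exact h ▸ hcl ▸ List.mem_map_of_mem (List.head_mem hα)

theorem invariant_getLast_of_isChain {P : V → Prop} (hP : ∀ e, P (s e) → P (r e)) :
    ∀ {p : List E} (hp : p ≠ []), (p.IsChain fun e f => r e = s f) →
      P (s (p.head hp)) → P (r (p.getLast hp))
  | [e], _, _, h => hP e h
  | e :: f :: t, _, hch, h => by
    rw [List.isChain_cons_cons] at hch
    exact invariant_getLast_of_isChain hP (List.cons_ne_nil f t) hch.2 (hch.1 ▸ hP e h)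

theorem closed_path_covers_of_no_exit
    (hconn : ∀ v w : V, ∃ (p : List E) (hp : p ≠ []),
      (p.IsChain fun e f => r e = s f) ∧ s (p.head hp) = v ∧ r (p.getLast hp) = w)
    {α : List E} (hα : α ≠ []) (hch : α.IsChain fun e f => r e = s f)
    (hcl : s (α.head hα) = r (α.getLast hα)) (hexit : ∀ f, ∀ e ∈ α, s f = s e → f = e) :
    (∀ v : V, v ∈ α.map s) ∧ ∀ e : E, e ∈ α := by
  have mem_of_source_mem : ∀ f, s f ∈ α.map s → f ∈ α := fun f hf => by
    obtain ⟨e, he, hes⟩ := List.mem_map.mp hf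
    rwa [hexit f e he hes.symm]
  have mem_sources : ∀ v, v ∈ α.map s := fun v => by
    obtain ⟨p, hp, hpch, hps, rfl⟩ := hconn (s (α.head hα)) v
    refine invariant_getLast_of_isChain (P := (· ∈ α.map s))
      (fun f hf => target_mem_sources_of_closed hα hch hcl (mem_of_source_mem f hf)) hp hpch ?_
    exact hps ▸ List.mem_map_of_mem (List.head_mem hα)
  exact ⟨mem_sources, fun e => mem_of_source_mem e (mem_sources _)⟩

end DirectedGraph

theorem stmt6_general {V E : Type*} (r s : E → V)
    (hconn : ∀ v w : V, ∃ (p : List E) (hp : p ≠ []),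
      p.Chain' (fun e f => r e = s f) ∧ s (p.head hp) = v ∧ r (p.getLast hp) = w) :
    (∀ (α : List E) (hα : α ≠ []), α.Chain' (fun e f => r e = s f) →
        s (α.head hα) = r (α.getLast hα) → ∃ f : E, ∃ e ∈ α, s f = s e ∧ f ≠ e)
      ↔
    ¬ (∃ (α : List E) (hα : α ≠ []), α.Chain' (fun e f => r e = s f) ∧
        s (α.head hα) = r (α.getLast hα) ∧ (α.map s).Nodup ∧
        (∀ v : V, v ∈ α.map s) ∧ (∀ e : E, e ∈ α)) := by
  constructor
  · rintro hL ⟨α, hα, hch, hcl, hnd, -, mem_all⟩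
    obtain ⟨f, e, he, hfe, hne⟩ := hL α hα hch hcl
    exact hne (List.inj_on_of_nodup_map hnd (mem_all f) he hfe)
  · intro hsimple α hα hch hcl
    by_contra! hexit
    obtain ⟨γ, hγ, hγch, hγcl, hγnd, hγsub⟩ := exists_closed_subpath_nodup_sources α hα hch hcl
    exact hsimple ⟨γ, hγ, hγch, hγcl, hγnd, closed_path_covers_of_no_exit hconn hγ
      hγch hγcl fun f e he => hexit f e (hγsub he)⟩

/-- Let `E` be a strongly connected directed graph with finitely many vertices.  Then `E`
satisfies Condition (L) (every cycle has an exit) if and only if `E` is not a simple cycle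
(a cycle with pairwise distinct base vertices, passing through every vertex exactly once,
whose edges are exactly all edges of the graph). -/
theorem stmt6 {V E : Type*} [Finite V] (r s : E → V)
    (hconn : ∀ v w : V, ∃ (p : List E) (hp : p ≠ []),
      p.Chain' (fun e f => r e = s f) ∧ s (p.head hp) = v ∧ r (p.getLast hp) = w) :
    (∀ (α : List E) (hα : α ≠ []), α.Chain' (fun e f => r e = s f) →
        s (α.head hα) = r (α.getLast hα) → ∃ f : E, ∃ e ∈ α, s f = s e ∧ f ≠ e)
      ↔
    ¬ (∃ (α : List E) (hα : α ≠ []), α.Chain' (fun e f => r e = s f) ∧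
        s (α.head hα) = r (α.getLast hα) ∧ (α.map s).Nodup ∧
        (∀ v : V, v ∈ α.map s) ∧ (∀ e : E, e ∈ α)) :=
  stmt6_general r s hconn
end
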